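/- Let μ* be the SOSM of (N, M, u) and μ*_i the SOSM of the market with student i removed. Define N_{j,1} = μ*⁻¹(j, u) \ μ*_i⁻¹(j, u_{-i}) and N_{j,0} = μ*_i⁻¹(j, u_{-i}) \ μ*⁻¹(j, u). Then for any college j that is at full capacity under μ*_i (i.e., |μ*_i⁻¹(j, u_{-i})| = q_j), we have |N_{j,1}| = |N_{j,0}|. -/

import Mathlib

attribute [local instance] Classical.propDecidable

noncomputable section

/-- A many-to-one college admissions market (college admissions model) with `n`
students and `m` colleges.  Strict preferences are encoded by injective rank
functions (a smaller rank means more preferred); `none` is the outside option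
`0` (being unmatched / an unfilled position). -/
structure Market (n m : ℕ) where
  quota : Fin m → ℕ
  sRank : Fin n → Option (Fin m) → ℕ
  sRank_inj : ∀ i, Function.Injective (sRank i)
  cRank : Fin m → Option (Fin n) → ℕ
  cRank_inj : ∀ j, Function.Injective (cRank j)

namespace Market

variable {n m : ℕ}

/-- Student `i` strictly prefers `a` to `b`. -/
def sPref (M : Market n m) (i : Fin n) (a b : Option (Fin m)) : Prop :=
  M.sRank i a < M.sRank i b

/-- College `j` strictly prefers `a` to `b`. -/
def cPref (M : Market n m) (j : Fin m) (a b : Option (Fin n)) : Prop :=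
  M.cRank j a < M.cRank j b

/-- The set `μ⁻¹(j)` of students matched to college `j` under `μ`. -/
def assigned (M : Market n m) (μ : Fin n → Option (Fin m)) (j : Fin m) : Finset (Fin n) :=
  Finset.univ.filter fun i => μ i = some j

/-- `μ` is a (capacity-feasible) matching: `|μ⁻¹(j)| ≤ q_j` for every college. -/
def IsMatching (M : Market n m) (μ : Fin n → Option (Fin m)) : Prop :=
  ∀ j, (M.assigned μ j).card ≤ M.quota j

/-- Individual rationality of `μ`. -/
def IndRational (M : Market n m) (μ : Fin n → Option (Fin m)) : Prop :=
  (∀ i, ¬ M.sPref i none (μ i)) ∧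
  (∀ j i', μ i' = some j → ¬ M.cPref j none (some i'))

/-- `(i, j)` is a blocking pair for `μ`. -/
def Blocks (M : Market n m) (μ : Fin n → Option (Fin m)) (i : Fin n) (j : Fin m) : Prop :=
  M.sPref i (some j) (μ i) ∧
  (((M.assigned μ j).card < M.quota j ∧ M.cPref j (some i) none) ∨
   ((M.assigned μ j).card = M.quota j ∧ ∃ i' ∈ M.assigned μ j, M.cPref j (some i) (some i')))

/-- `μ` is stable: individually rational with no blocking pair. -/
def Stable (M : Market n m) (μ : Fin n → Option (Fin m)) : Prop :=
  M.IndRational μ ∧ ∀ i j, ¬ M.Blocks μ i j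

/-- `μ` is envy-free: individually rational and any blocking pair involves an
unmatched student. -/
def EnvyFree (M : Market n m) (μ : Fin n → Option (Fin m)) : Prop :=
  M.IndRational μ ∧ ∀ i j, M.Blocks μ i j → μ i = none

/-- `μ` is 1-envy-free: envy-free, and either stable or there is one and only
one student who belongs to every blocking pair. -/
def OneEnvyFree (M : Market n m) (μ : Fin n → Option (Fin m)) : Prop :=
  M.EnvyFree μ ∧ (M.Stable μ ∨ ∃! i : Fin n, ∀ i' j, M.Blocks μ i' j → i' = i)

/-- `(i, j)` is a student-maximal blocking pair: `j` is `i`'s most preferred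
college among those with whom `i` forms a blocking pair. -/
def StudentMaxBlock (M : Market n m) (μ : Fin n → Option (Fin m)) (i : Fin n) (j : Fin m) :
    Prop :=
  M.Blocks μ i j ∧ ∀ j', M.Blocks μ i j' → M.sRank i (some j) ≤ M.sRank i (some j')

/-- `T` is the re-stabilization operator: on a 1-envy-free matching with no
blocking pair it is the identity; otherwise it satisfies the unique
student-maximal blocking pair `(i, j)`, matching `i` to `j`, keeping everyone
not matched to `j` unchanged, keeping the students of `j` if `j` has a vacancy
or if they are not `j`'s worst current student, and unmatching `j`'s worst
current student otherwise. -/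
def IsTStep (M : Market n m) (T : (Fin n → Option (Fin m)) → Fin n → Option (Fin m)) : Prop :=
  ∀ μ, M.IsMatching μ → M.OneEnvyFree μ →
    ((∀ i j, ¬ M.Blocks μ i j) → T μ = μ) ∧
    ∀ i j, M.StudentMaxBlock μ i j →
      T μ i = some j ∧
      ∀ i', i' ≠ i →
        (μ i' ≠ some j → T μ i' = μ i') ∧
        (μ i' = some j →
          ((M.assigned μ j).card < M.quota j → T μ i' = μ i') ∧
          ((M.assigned μ j).card = M.quota j →
            ((∃ i'' ∈ M.assigned μ j, M.cPref j (some i') (some i'')) → T μ i' = μ i') ∧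
            ((∀ i'' ∈ M.assigned μ j, i'' ≠ i' → M.cPref j (some i'') (some i')) →
              T μ i' = none)))

/-- `Tstar` iterates `T` finitely many times from any 1-envy-free matching
until a fixed point of `T` is reached. -/
def IsTStarOf (M : Market n m) (T Tstar : (Fin n → Option (Fin m)) → Fin n → Option (Fin m)) :
    Prop :=
  ∀ μ, M.IsMatching μ → M.OneEnvyFree μ →
    ∃ r : ℕ, Tstar μ = T^[r] μ ∧ T (Tstar μ) = Tstar μ

/-- A one-step responsive improvement for college `j`: `A` is obtained from `B`
either by filling a vacancy with an acceptable student, or by swapping a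
student of `B` for a strictly preferred outside student. -/
def SwapImproves (M : Market n m) (j : Fin m) (A B : Finset (Fin n)) : Prop :=
  (∃ i₁, i₁ ∉ B ∧ A = insert i₁ B ∧ M.cPref j (some i₁) none) ∨
  (∃ i₁ i₂, i₂ ∈ B ∧ i₁ ∉ B ∧ A = insert i₁ (B.erase i₂) ∧ M.cPref j (some i₁) (some i₂))

/-- The responsive extension of college `j`'s strict preference to sets of
students: the transitive closure of one-step responsive improvements. -/
def SetPref (M : Market n m) (j : Fin m) (A B : Finset (Fin n)) : Prop :=
  Relation.TransGen (M.SwapImproves j) A B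

/-- `μ₁ ≿ μ₂`: every college either gets the same set of students or a
strictly (responsively) preferred set. -/
def CollegesWeakPref (M : Market n m) (μ₁ μ₂ : Fin n → Option (Fin m)) : Prop :=
  ∀ j, M.assigned μ₁ j = M.assigned μ₂ j ∨ M.SetPref j (M.assigned μ₁ j) (M.assigned μ₂ j)

/-- `μ` is the student-optimal stable matching: a stable matching that every
student weakly prefers to any other stable matching. -/
def IsSOSM (M : Market n m) (μ : Fin n → Option (Fin m)) : Prop :=
  M.IsMatching μ ∧ M.Stable μ ∧
    ∀ μ', M.IsMatching μ' → M.Stable μ' → ∀ i, M.sRank i (μ i) ≤ M.sRank i (μ' i)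

/-- `μ` (with student `i` unmatched) is a stable matching of the market in
which student `i` has been removed. -/
def StableAway (M : Market n m) (i : Fin n) (μ : Fin n → Option (Fin m)) : Prop :=
  μ i = none ∧
  (∀ i', i' ≠ i → ¬ M.sPref i' none (μ i')) ∧
  (∀ j i', i' ≠ i → μ i' = some j → ¬ M.cPref j none (some i')) ∧
  (∀ i' j, i' ≠ i → ¬ M.Blocks μ i' j)

/-- `μ` (with student `i` unmatched) is the student-optimal stable matching of
the market in which student `i` has been removed. -/
def IsSOSMAway (M : Market n m) (i : Fin n) (μ : Fin n → Option (Fin m)) : Prop :=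
  M.IsMatching μ ∧ M.StableAway i μ ∧
    ∀ μ', M.IsMatching μ' → M.StableAway i μ' →
      ∀ i', i' ≠ i → M.sRank i' (μ i') ≤ M.sRank i' (μ' i')

/-- The maximum rank difference `h(w)` among the colleges' preferences: the
largest rank gap `|w_j(i₁) − w_j(i₂)|` over colleges `j` and pairs `(i₁, i₂)`
on whose relative ranking at least two colleges disagree (`0` if there is no
disagreement). -/
def maxRankDiff (M : Market n m) : ℕ :=
  Finset.univ.sup fun j : Fin m =>
    (Finset.univ.filter fun q : Option (Fin n) × Option (Fin n) =>
        ∃ j₁ j₂ : Fin m, M.cPref j₁ q.1 q.2 ∧ M.cPref j₂ q.2 q.1).sup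
      fun q => ((M.cRank j q.1 : ℤ) - (M.cRank j q.2 : ℤ)).natAbs

/-- `N*_{j,1}(μ) = μ⁻¹(j) \ μ*⁻¹(j)` : students of `j` under `μ` but not `μs`. -/
def Nset1 (M : Market n m) (μ μs : Fin n → Option (Fin m)) (j : Fin m) : Finset (Fin n) :=
  M.assigned μ j \ M.assigned μs j

/-- `N*_{j,0}(μ) = μ*⁻¹(j) \ μ⁻¹(j)` : students of `j` under `μs` but not `μ`. -/
def Nset0 (M : Market n m) (μ μs : Fin n → Option (Fin m)) (j : Fin m) : Finset (Fin n) :=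
  M.assigned μs j \ M.assigned μ j

/-- The rank `r_{j,i}(A)` of student `i` within the set `A` according to `≻_j`. -/
def rankIn (M : Market n m) (j : Fin m) (i : Fin n) (A : Finset (Fin n)) : ℕ :=
  (A.filter fun i' => M.cPref j (some i') (some i)).card + 1

/-- `a ▷_j b`: student `a` displaces student `b` from college `j` (as we move
from the SOSM `μs` to the stable matching `μ`). -/
def Displaces (M : Market n m) (μ μs : Fin n → Option (Fin m)) (j : Fin m) (a b : Fin n) :
    Prop :=
  a ∈ M.Nset1 μ μs j ∧ b ∈ M.Nset0 μ μs j ∧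
    M.rankIn j a (M.Nset1 μ μs j) = M.rankIn j b (M.Nset0 μ μs j)

/-- `a ▷ b`: `a` displaces `b` from some college. -/
def DisplacesAny (M : Market n m) (μ μs : Fin n → Option (Fin m)) (a b : Fin n) : Prop :=
  ∃ j, M.Displaces μ μs j a b

/-- The positions of the related one-to-one market: college `j` is split into
`q_j` ordered positions. -/
abbrev Position (M : Market n m) : Type := (j : Fin m) × Fin (M.quota j)

/-- Student `i`'s strict preference over positions in the related one-to-one
market: positions of strictly better colleges are better, and within a college
a smaller index is better. -/
def PosBetter (M : Market n m) (i : Fin n) :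
    Option (Position M) → Option (Position M) → Prop
  | some q, some q' =>
      M.sRank i (some q.1) < M.sRank i (some q'.1) ∨ (q.1 = q'.1 ∧ (q.2 : ℕ) < (q'.2 : ℕ))
  | some q, none => M.sRank i (some q.1) < M.sRank i none
  | none, some q' => M.sRank i none < M.sRank i (some q'.1)
  | none, none => False

/-- `(μN, μM)` is the one-to-one matching of the related market corresponding
to the many-to-one matching `μ`: the students of `μ⁻¹(j)` occupy, in the order
of college `j`'s preference, the ordered positions of `j`. -/
def Corresponds (M : Market n m) (μ : Fin n → Option (Fin m))
    (μN : Fin n → Option (Position M)) (μM : Position M → Option (Fin n)) : Prop :=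
  (∀ i p, μN i = some p ↔ μM p = some i) ∧
  (∀ i j, (∃ s, μN i = some ⟨j, s⟩) ↔ μ i = some j) ∧
  (∀ i j (s : Fin (M.quota j)), μN i = some ⟨j, s⟩ →
    (s : ℕ) = ((M.assigned μ j).filter fun i' => M.cPref j (some i') (some i)).card)

/-- `(i, p)` is a blocking pair in the related one-to-one market. -/
def PosBlocks (M : Market n m) (μN : Fin n → Option (Position M))
    (μM : Position M → Option (Fin n)) (i : Fin n) (p : Position M) : Prop :=
  M.PosBetter i (some p) (μN i) ∧ M.cPref p.1 (some i) (μM p)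

/-- Individual rationality in the related one-to-one market. -/
def PosIR (M : Market n m) (μN : Fin n → Option (Position M))
    (μM : Position M → Option (Fin n)) : Prop :=
  (∀ i, ¬ M.PosBetter i none (μN i)) ∧ (∀ p : Position M, ¬ M.cPref p.1 none (μM p))

/-- Stability in the related one-to-one market. -/
def PosStable (M : Market n m) (μN : Fin n → Option (Position M))
    (μM : Position M → Option (Fin n)) : Prop :=
  M.PosIR μN μM ∧ ∀ i p, ¬ M.PosBlocks μN μM i p

/-- Simplicity in the related one-to-one market: individually rational and any
blocking pair involves an unmatched student. -/
def PosSimple (M : Market n m) (μN : Fin n → Option (Position M))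
    (μM : Position M → Option (Fin n)) : Prop :=
  M.PosIR μN μM ∧ ∀ i p, M.PosBlocks μN μM i p → μN i = none

/-- 1-simplicity in the related one-to-one market: simple, and either stable or
there is one and only one student belonging to every blocking pair. -/
def PosOneSimple (M : Market n m) (μN : Fin n → Option (Position M))
    (μM : Position M → Option (Fin n)) : Prop :=
  M.PosSimple μN μM ∧
    (M.PosStable μN μM ∨ ∃! i : Fin n, ∀ i' p, M.PosBlocks μN μM i' p → i' = i)

end Market

/-- A generic one-to-one matching market with `n` students and `p` positions,
with strict preferences encoded by injective rank functions. -/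
structure OOMarket (n p : ℕ) where
  sRank : Fin n → Option (Fin p) → ℕ
  sRank_inj : ∀ i, Function.Injective (sRank i)
  pRank : Fin p → Option (Fin n) → ℕ
  pRank_inj : ∀ c, Function.Injective (pRank c)

namespace OOMarket

variable {n p : ℕ}

/-- `(μN, μM)` is a one-to-one matching. -/
def IsOOMatching (O : OOMarket n p) (μN : Fin n → Option (Fin p))
    (μM : Fin p → Option (Fin n)) : Prop :=
  ∀ i c, μN i = some c ↔ μM c = some i

/-- `(i, c)` is a blocking pair for `(μN, μM)`. -/
def OOBlocks (O : OOMarket n p) (μN : Fin n → Option (Fin p))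
    (μM : Fin p → Option (Fin n)) (i : Fin n) (c : Fin p) : Prop :=
  O.sRank i (some c) < O.sRank i (μN i) ∧ O.pRank c (some i) < O.pRank c (μM c)

/-- Individual rationality. -/
def OOIR (O : OOMarket n p) (μN : Fin n → Option (Fin p))
    (μM : Fin p → Option (Fin n)) : Prop :=
  (∀ i, ¬ O.sRank i none < O.sRank i (μN i)) ∧ (∀ c, ¬ O.pRank c none < O.pRank c (μM c))

/-- Stability. -/
def OOStable (O : OOMarket n p) (μN : Fin n → Option (Fin p))
    (μM : Fin p → Option (Fin n)) : Prop :=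
  O.OOIR μN μM ∧ ∀ i c, ¬ O.OOBlocks μN μM i c

/-- Simplicity: individually rational and every blocking pair involves an
unmatched student. -/
def OOSimple (O : OOMarket n p) (μN : Fin n → Option (Fin p))
    (μM : Fin p → Option (Fin n)) : Prop :=
  O.OOIR μN μM ∧ ∀ i c, O.OOBlocks μN μM i c → μN i = none

/-- 1-simplicity: simple, and either stable or there is one and only one
student belonging to every blocking pair. -/
def OOOneSimple (O : OOMarket n p) (μN : Fin n → Option (Fin p))
    (μM : Fin p → Option (Fin n)) : Prop :=
  O.OOSimple μN μM ∧
    (O.OOStable μN μM ∨ ∃! i : Fin n, ∀ i' c, O.OOBlocks μN μM i' c → i' = i)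

end OOMarket

end

/-!
Let `U` be the students other than `i` who strictly prefer `μ*` to `μ*_i`. Each of them is,
under `μ*`, at a college that is full under `μ*_i` with students it prefers to her, so every
`μ*_i`-student such a college does not keep from `μ*` lies in `U` (otherwise he would block `μ*`).
Counting seats at the set `F` of these colleges gives `μ*⁻¹(F) = μ*_i⁻¹(F)`, and then matching
the students of `U` as in `μ*` and everyone else as in `μ*_i` is stable without `i`. Optimality of
`μ*_i` forces `U = ∅`: nobody other than `i` is worse off once `i` leaves. A vacancy at `j` under
`μ*` would then be blocked by a student of `μ*_i⁻¹(j) \ μ*⁻¹(j)`, so `j` is full under both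
matchings and the two differences have the same size.
-/

namespace Market

variable {n m : ℕ}

noncomputable def improvers (M : Market n m) (i : Fin n) (μ ν : Fin n → Option (Fin m)) :
    Finset (Fin n) :=
  Finset.univ.filter fun a => a ≠ i ∧ M.sPref a (μ a) (ν a)

noncomputable def improverColleges (M : Market n m) (i : Fin n) (μ ν : Fin n → Option (Fin m)) :
    Finset (Fin m) :=
  Finset.univ.filter fun c => ∃ a ∈ M.improvers i μ ν, μ a = some c

noncomputable def studentJoin (M : Market n m) (i : Fin n) (μ ν : Fin n → Option (Fin m)) :
    Fin n → Option (Fin m) :=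
  fun a => if a ∈ M.improvers i μ ν then μ a else ν a

variable {M : Market n m}

@[simp]
lemma mem_assigned {μ : Fin n → Option (Fin m)} {j : Fin m} {a : Fin n} :
    a ∈ M.assigned μ j ↔ μ a = some j := by
  simp [assigned]

lemma card_biUnion_assigned (μ : Fin n → Option (Fin m)) (F : Finset (Fin m)) :
    (F.biUnion (M.assigned μ)).card = ∑ j ∈ F, (M.assigned μ j).card := by
  refine Finset.card_biUnion fun j _ j' _ hjj' => Finset.disjoint_left.2 fun a ha ha' => ?_
  rw [Finset.mem_coe, mem_assigned] at *
  exact hjj' (Option.some_injective _ (ha.symm.trans ha'))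

lemma cPref_of_not_cPref {j : Fin m} {a b : Option (Fin n)} (hab : a ≠ b)
    (h : ¬ M.cPref j b a) : M.cPref j a b :=
  lt_of_le_of_ne (not_lt.1 h) fun heq => hab (M.cRank_inj j heq)

lemma sPref_of_le_of_ne {a : Fin n} {x y : Option (Fin m)} (h : M.sRank a x ≤ M.sRank a y)
    (hxy : x ≠ y) : M.sPref a x y :=
  lt_of_le_of_ne h fun heq => hxy (M.sRank_inj a heq)

lemma Stable.cPref_none {μ : Fin n → Option (Fin m)} (hμ : M.Stable μ) {a : Fin n} {c : Fin m}
    (h : μ a = some c) : M.cPref c (some a) none :=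
  cPref_of_not_cPref (Option.some_ne_none a) (hμ.1.2 c a h)

lemma StableAway.ne_of_eq_some {i : Fin n} {μ : Fin n → Option (Fin m)}
    (hμ : M.StableAway i μ) {a : Fin n} {c : Fin m} (h : μ a = some c) : a ≠ i := by
  rintro rfl
  simp [hμ.1] at h

lemma StableAway.cPref_none {i : Fin n} {μ : Fin n → Option (Fin m)} (hμ : M.StableAway i μ)
    {a : Fin n} {c : Fin m} (h : μ a = some c) : M.cPref c (some a) none :=
  cPref_of_not_cPref (Option.some_ne_none a) (hμ.2.2.1 c a (hμ.ne_of_eq_some h) h)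

lemma card_eq_quota_and_cPref_of_not_blocks {μ : Fin n → Option (Fin m)} (hμ : M.IsMatching μ)
    {a : Fin n} {c : Fin m} (hnb : ¬ M.Blocks μ a c) (hpref : M.sPref a (some c) (μ a))
    (hacc : M.cPref c (some a) none) :
    (M.assigned μ c).card = M.quota c ∧ ∀ b ∈ M.assigned μ c, M.cPref c (some b) (some a) := by
  have hfull : (M.assigned μ c).card = M.quota c :=
    (hμ c).antisymm (not_lt.1 fun hlt => hnb ⟨hpref, Or.inl ⟨hlt, hacc⟩⟩)
  refine ⟨hfull, fun b hb =>
    cPref_of_not_cPref ?_ fun hab => hnb ⟨hpref, Or.inr ⟨hfull, b, hb, hab⟩⟩⟩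
  rintro ⟨⟩
  rw [mem_assigned] at hb
  exact lt_irrefl _ (hb ▸ hpref)

lemma blocks_of_cPref_mem {μ : Fin n → Option (Fin m)} (hμ : M.IsMatching μ) {a b : Fin n}
    {c : Fin m} (hpref : M.sPref b (some c) (μ b)) (hacc : M.cPref c (some b) none)
    (ha : a ∈ M.assigned μ c) (hba : M.cPref c (some b) (some a)) : M.Blocks μ b c :=
  ⟨hpref, (hμ c).lt_or_eq.imp (fun h => ⟨h, hacc⟩) fun h => ⟨h, a, ha, hba⟩⟩

lemma Blocks.of_sRank_le {μ₁ μ₂ : Fin n → Option (Fin m)} {a : Fin n} {c : Fin m}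
    (h : M.Blocks μ₁ a c) (hc : M.assigned μ₂ c = M.assigned μ₁ c)
    (ha : M.sRank a (μ₁ a) ≤ M.sRank a (μ₂ a)) : M.Blocks μ₂ a c :=
  ⟨lt_of_lt_of_le h.1 ha, hc ▸ h.2⟩

section StudentJoin

variable {i : Fin n} {μ ν : Fin n → Option (Fin m)}

lemma mem_improvers {a : Fin n} :
    a ∈ M.improvers i μ ν ↔ a ≠ i ∧ M.sPref a (μ a) (ν a) := by
  simp [improvers]

lemma mem_improverColleges {c : Fin m} :
    c ∈ M.improverColleges i μ ν ↔ ∃ a ∈ M.improvers i μ ν, μ a = some c := by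
  simp [improverColleges]

lemma improvers_subset_biUnion_assigned (hνs : M.StableAway i ν) :
    M.improvers i μ ν ⊆ (M.improverColleges i μ ν).biUnion (M.assigned μ) := by
  intro a ha
  obtain ⟨hai, hpref⟩ := mem_improvers.1 ha
  obtain ⟨c, hac⟩ := Option.ne_none_iff_exists'.1 fun h => hνs.2.1 a hai (h ▸ hpref)
  exact Finset.mem_biUnion.2 ⟨c, mem_improverColleges.2 ⟨a, ha, hac⟩, mem_assigned.2 hac⟩

lemma card_eq_quota_and_cPref_of_mem_improvers (hμs : M.Stable μ) (hν : M.IsMatching ν)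
    (hνs : M.StableAway i ν) {a : Fin n} {c : Fin m} (ha : a ∈ M.improvers i μ ν)
    (hac : μ a = some c) :
    (M.assigned ν c).card = M.quota c ∧ ∀ b ∈ M.assigned ν c, M.cPref c (some b) (some a) := by
  obtain ⟨hai, hpref⟩ := mem_improvers.1 ha
  rw [hac] at hpref
  exact card_eq_quota_and_cPref_of_not_blocks hν (hνs.2.2.2 a c hai) hpref (hμs.cPref_none hac)

lemma mem_improvers_of_mem_sdiff (hμ : M.IsMatching μ) (hμs : M.Stable μ)
    (hν : M.IsMatching ν) (hνs : M.StableAway i ν) {b : Fin n} {c : Fin m}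
    (hc : c ∈ M.improverColleges i μ ν) (hb : b ∈ M.assigned ν c \ M.assigned μ c) :
    b ∈ M.improvers i μ ν := by
  obtain ⟨a, ha, hac⟩ := mem_improverColleges.1 hc
  have hprefers := (card_eq_quota_and_cPref_of_mem_improvers hμs hν hνs ha hac).2
  rw [Finset.mem_sdiff, mem_assigned, mem_assigned] at hb
  refine mem_improvers.2 ⟨hνs.ne_of_eq_some hb.1, ?_⟩
  by_contra hnot
  rw [hb.1] at hnot
  have hpref : M.sPref b (some c) (μ b) := sPref_of_le_of_ne (not_lt.1 hnot) fun h => hb.2 h.symm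
  exact hμs.2 b c (blocks_of_cPref_mem hμ hpref (hνs.cPref_none hb.1) (mem_assigned.2 hac)
    (hprefers b (mem_assigned.2 hb.1)))

lemma biUnion_assigned_improverColleges (hμ : M.IsMatching μ) (hμs : M.Stable μ)
    (hν : M.IsMatching ν) (hνs : M.StableAway i ν) :
    (M.improverColleges i μ ν).biUnion (M.assigned ν) =
      (M.improverColleges i μ ν).biUnion (M.assigned μ) := by
  set F := M.improverColleges i μ ν
  have hsub : F.biUnion (M.assigned ν) ⊆ F.biUnion (M.assigned μ) := by
    intro b hb
    obtain ⟨c, hc, hbc⟩ := Finset.mem_biUnion.1 hb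
    by_cases hbμ : b ∈ M.assigned μ c
    · exact Finset.mem_biUnion.2 ⟨c, hc, hbμ⟩
    · exact improvers_subset_biUnion_assigned hνs
        (mem_improvers_of_mem_sdiff hμ hμs hν hνs hc (Finset.mem_sdiff.2 ⟨hbc, hbμ⟩))
  refine Finset.eq_of_subset_of_card_le hsub ?_
  rw [card_biUnion_assigned, card_biUnion_assigned]
  refine Finset.sum_le_sum fun c hc => ?_
  obtain ⟨a, ha, hac⟩ := mem_improverColleges.1 hc
  exact (card_eq_quota_and_cPref_of_mem_improvers hμs hν hνs ha hac).1 ▸ hμ c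

lemma exists_mem_improverColleges_of_mem_improvers (hμ : M.IsMatching μ) (hμs : M.Stable μ)
    (hν : M.IsMatching ν) (hνs : M.StableAway i ν) {a : Fin n} (ha : a ∈ M.improvers i μ ν) :
    ∃ c ∈ M.improverColleges i μ ν, ν a = some c := by
  have := improvers_subset_biUnion_assigned hνs ha
  rw [← biUnion_assigned_improverColleges hμ hμs hν hνs, Finset.mem_biUnion] at this
  simpa only [mem_assigned] using this

lemma eq_some_iff_of_not_mem_improvers (hμ : M.IsMatching μ) (hμs : M.Stable μ)
    (hν : M.IsMatching ν) (hνs : M.StableAway i ν) {a : Fin n} (ha : a ∉ M.improvers i μ ν)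
    {c : Fin m} (hc : c ∈ M.improverColleges i μ ν) : ν a = some c ↔ μ a = some c := by
  have hstays : ∀ c ∈ M.improverColleges i μ ν, ν a = some c → μ a = some c := by
    intro c hc hνa
    by_contra hμa
    exact ha (mem_improvers_of_mem_sdiff hμ hμs hν hνs hc (by simp [hνa, hμa]))
  refine ⟨hstays c hc, fun hμa => ?_⟩
  have ha' : a ∈ (M.improverColleges i μ ν).biUnion (M.assigned ν) := by
    rw [biUnion_assigned_improverColleges hμ hμs hν hνs]
    exact Finset.mem_biUnion.2 ⟨c, hc, mem_assigned.2 hμa⟩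
  obtain ⟨c', hc', hνa⟩ := Finset.mem_biUnion.1 ha'
  rw [mem_assigned] at hνa
  rw [hνa]
  exact (hstays c' hc' hνa).symm.trans hμa

lemma assigned_studentJoin_of_mem (hμ : M.IsMatching μ) (hμs : M.Stable μ)
    (hν : M.IsMatching ν) (hνs : M.StableAway i ν) {c : Fin m}
    (hc : c ∈ M.improverColleges i μ ν) : M.assigned (M.studentJoin i μ ν) c = M.assigned μ c := by
  ext a
  simp only [mem_assigned, studentJoin]
  split_ifs with ha
  · rfl
  · exact eq_some_iff_of_not_mem_improvers hμ hμs hν hνs ha hc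

lemma assigned_studentJoin_of_not_mem (hμ : M.IsMatching μ) (hμs : M.Stable μ)
    (hν : M.IsMatching ν) (hνs : M.StableAway i ν) {c : Fin m}
    (hc : c ∉ M.improverColleges i μ ν) : M.assigned (M.studentJoin i μ ν) c = M.assigned ν c := by
  ext a
  simp only [mem_assigned, studentJoin]
  split_ifs with ha
  · obtain ⟨c', hc', hνa⟩ := exists_mem_improverColleges_of_mem_improvers hμ hμs hν hνs ha
    have hμc : μ a ≠ some c := fun h => hc (mem_improverColleges.2 ⟨a, ha, h⟩)
    have hνc : ν a ≠ some c := fun h => hc (Option.some_injective _ (h.symm.trans hνa) ▸ hc')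
    simp only [hμc, hνc]
  · rfl

lemma studentJoin_isMatching (hμ : M.IsMatching μ) (hμs : M.Stable μ)
    (hν : M.IsMatching ν) (hνs : M.StableAway i ν) : M.IsMatching (M.studentJoin i μ ν) := by
  intro c
  by_cases hc : c ∈ M.improverColleges i μ ν
  · rw [assigned_studentJoin_of_mem hμ hμs hν hνs hc]; exact hμ c
  · rw [assigned_studentJoin_of_not_mem hμ hμs hν hνs hc]; exact hν c

lemma sRank_studentJoin_le_left {a : Fin n} (ha : a ≠ i) :
    M.sRank a (M.studentJoin i μ ν a) ≤ M.sRank a (μ a) := by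
  by_cases h : a ∈ M.improvers i μ ν
  · simp [studentJoin, h]
  · simp only [studentJoin, h, if_false]
    exact not_lt.1 fun hlt => h (mem_improvers.2 ⟨ha, hlt⟩)

lemma sRank_studentJoin_le_right (a : Fin n) :
    M.sRank a (M.studentJoin i μ ν a) ≤ M.sRank a (ν a) := by
  by_cases h : a ∈ M.improvers i μ ν
  · simp only [studentJoin, h, if_true]
    exact (mem_improvers.1 h).2.le
  · simp [studentJoin, h]

lemma studentJoin_stableAway (hμ : M.IsMatching μ) (hμs : M.Stable μ)
    (hν : M.IsMatching ν) (hνs : M.StableAway i ν) : M.StableAway i (M.studentJoin i μ ν) := by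
  have hi : i ∉ M.improvers i μ ν := fun h => (mem_improvers.1 h).1 rfl
  refine ⟨by simp [studentJoin, hi, hνs.1], fun a hai => ?_, fun c a hai => ?_, fun a c hai => ?_⟩
  · unfold studentJoin
    split_ifs
    exacts [hμs.1.1 a, hνs.2.1 a hai]
  · unfold studentJoin
    split_ifs
    exacts [hμs.1.2 c a, hνs.2.2.1 c a hai]
  · intro hb
    by_cases hc : c ∈ M.improverColleges i μ ν
    · exact hμs.2 a c (hb.of_sRank_le (assigned_studentJoin_of_mem hμ hμs hν hνs hc).symm
        (sRank_studentJoin_le_left hai))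
    · exact hνs.2.2.2 a c hai (hb.of_sRank_le
        (assigned_studentJoin_of_not_mem hμ hμs hν hνs hc).symm (sRank_studentJoin_le_right a))

lemma sRank_le_of_isSOSMAway (hμ : M.IsMatching μ) (hμs : M.Stable μ) (hν : M.IsSOSMAway i ν)
    {a : Fin n} (ha : a ≠ i) : M.sRank a (ν a) ≤ M.sRank a (μ a) := by
  obtain ⟨hνm, hνs, hopt⟩ := hν
  refine not_lt.1 fun hlt => ?_
  have ha' : a ∈ M.improvers i μ ν := mem_improvers.2 ⟨ha, hlt⟩
  have hjoin := hopt _ (studentJoin_isMatching hμ hμs hνm hνs)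
    (studentJoin_stableAway hμ hμs hνm hνs) a ha
  simp only [studentJoin, ha', if_true] at hjoin
  exact lt_irrefl _ (hjoin.trans_lt hlt)

lemma card_assigned_eq_quota_of_sRank_le (hμ : M.IsMatching μ) (hμs : M.Stable μ)
    (hνs : M.StableAway i ν) (hle : ∀ a, a ≠ i → M.sRank a (ν a) ≤ M.sRank a (μ a))
    {j : Fin m} (hfull : (M.assigned ν j).card = M.quota j) :
    (M.assigned μ j).card = M.quota j := by
  refine (hμ j).antisymm (not_lt.1 fun hlt => ?_)
  obtain ⟨b, hbν, hbμ⟩ : ∃ b ∈ M.assigned ν j, b ∉ M.assigned μ j :=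
    Finset.not_subset.1 fun hsub => hlt.not_ge (hfull.symm.le.trans (Finset.card_le_card hsub))
  rw [mem_assigned] at hbν hbμ
  have hpref : M.sPref b (some j) (μ b) :=
    sPref_of_le_of_ne (hbν ▸ hle b (hνs.ne_of_eq_some hbν)) fun h => hbμ h.symm
  exact hμs.2 b j ⟨hpref, Or.inl ⟨hlt, hνs.cPref_none hbν⟩⟩

end StudentJoin

end Market

/-- for a college `j` at full capacity under the SOSM `μ*_i` of
the market without student `i`, the in-flow and out-flow of students at `j`
between `μ*` and `μ*_i` are equinumerous. -/
theorem full_college_inflow_eq_outflow {n m : ℕ} (M : Market n m)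
    (i : Fin n) (μs μi : Fin n → Option (Fin m))
    (hs : M.IsSOSM μs) (hi : M.IsSOSMAway i μi)
    (j : Fin m) (hfull : (M.assigned μi j).card = M.quota j) :
    (M.assigned μs j \ M.assigned μi j).card =
      (M.assigned μi j \ M.assigned μs j).card := by
  obtain ⟨hμ, hμs, -⟩ := hs
  have hle : ∀ a, a ≠ i → M.sRank a (μi a) ≤ M.sRank a (μs a) :=
    fun a ha => Market.sRank_le_of_isSOSMAway hμ hμs hi ha
  exact Finset.card_sdiff_comm
    ((Market.card_assigned_eq_quota_of_sRank_le hμ hμs hi.2.1 hle hfull).trans hfull.symm)
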